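/- Let B be a bicategory and W a class of 1-morphisms satisfying [WB1]–[WB4]. Given f, g : C → B, w : B → A with w ∈ W, and 2-cells β₁, β₂ : f ⇒ g, if w ∘ β₁ = w ∘ β₂ (as 2-cells w∘f ⇒ w∘g), then there exists v : D → C in W such that β₁ ∘ v = β₂ ∘ v. -/

import Mathlib

open CategoryTheory Bicategory

universe w v u

/-- A class of 1-morphisms in a bicategory. -/
def WClass (B : Type u) [Bicategory.{w, v} B] :=
  ∀ ⦃a b : B⦄, (a ⟶ b) → Prop

namespace WClass

variable {B : Type u} [Bicategory.{w, v} B]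

/-- [WB1]: all identities are in `W`. -/
def WB1 (W : WClass B) : Prop := ∀ a : B, W (𝟙 a)

/-- [WB2]: for composable arrows of `W` there is a pre-composition landing in `W`. -/
def WB2 (W : WClass B) : Prop :=
  ∀ ⦃a b c : B⦄ (vm : a ⟶ b) (wm : b ⟶ c), W vm → W wm →
    ∃ (a' : B) (u : a' ⟶ a), W (u ≫ vm ≫ wm)

/-- [WB3]: squares with invertible fillers over cospans with one leg in `W`. -/
def WB3 (W : WClass B) : Prop :=
  ∀ ⦃a b c : B⦄ (wm : a ⟶ b) (f : c ⟶ b), W wm →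
    ∃ (d : B) (h : d ⟶ a) (vm : d ⟶ c), W vm ∧ Nonempty (h ≫ wm ≅ vm ≫ f)

/-- `β` is a lifting of the 2-cell `η : f ≫ wm ⟶ g ≫ wm` along `wm`, via `u`. -/
def IsLift ⦃a b c : B⦄ (f g : a ⟶ b) (wm : b ⟶ c) (η : f ≫ wm ⟶ g ≫ wm)
    ⦃a' : B⦄ (u : a' ⟶ a) (β : u ≫ f ⟶ u ≫ g) : Prop :=
  β ▷ wm = (α_ u f wm).hom ≫ u ◁ η ≫ (α_ u g wm).inv

/-- [WB4]: existence of liftings of 2-cells along arrows of `W`, together with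
the compatibility of any two such liftings. -/
def WB4 (W : WClass B) : Prop :=
  (∀ ⦃a b c : B⦄ (f g : a ⟶ b) (wm : b ⟶ c), W wm → ∀ η : f ≫ wm ⟶ g ≫ wm,
    ∃ (a' : B) (u : a' ⟶ a), W u ∧ ∃ β : u ≫ f ⟶ u ≫ g, IsLift f g wm η u β) ∧
  (∀ ⦃a b c : B⦄ (f g : a ⟶ b) (wm : b ⟶ c), W wm → ∀ η : f ≫ wm ⟶ g ≫ wm,
    ∀ ⦃a₁ : B⦄ (u₁ : a₁ ⟶ a) (β₁ : u₁ ≫ f ⟶ u₁ ≫ g), W u₁ → IsLift f g wm η u₁ β₁ →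
      ∀ ⦃a₂ : B⦄ (u₂ : a₂ ⟶ a) (β₂ : u₂ ≫ f ⟶ u₂ ≫ g), W u₂ → IsLift f g wm η u₂ β₂ →
        ∃ (d : B) (s : d ⟶ a₁) (t : d ⟶ a₂), W (s ≫ u₁) ∧ W (t ≫ u₂) ∧
          ∃ εi : s ≫ u₁ ≅ t ≫ u₂,
            ((α_ s u₁ f).hom ≫ s ◁ β₁ ≫ (α_ s u₁ g).inv) ≫ εi.hom ▷ g =
              εi.hom ▷ f ≫ (α_ t u₂ f).hom ≫ t ◁ β₂ ≫ (α_ t u₂ g).inv)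

/-- [WB5]: `W` is closed under invertible 2-cells. -/
def WB5 (W : WClass B) : Prop :=
  ∀ ⦃a b : B⦄ (vm wm : a ⟶ b), W wm → Nonempty (vm ≅ wm) → W vm

end WClass
/-!
Whiskered by the identity, `β₁` and `β₂` are both lifts of the single 2-cell `β₁ ▷ wm` along
`wm`. The compatibility half of [WB4] then yields `s, t` with `s ≫ 𝟙 ∈ W` and an invertible
`ε : s ≫ 𝟙 ≅ t ≫ 𝟙` intertwining `(s ≫ 𝟙) ◁ β₁` with `(t ≫ 𝟙) ◁ β₂`; by the interchange law
the latter equals `(s ≫ 𝟙) ◁ β₂` conjugated by `ε`, and `ε` cancels.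
-/

namespace WClass

variable {B : Type u} [Bicategory.{w, v} B]

theorem isLift_id_whiskerLeft {a b c : B} {f g : a ⟶ b} (wm : b ⟶ c) (β : f ⟶ g) :
    IsLift f g wm (β ▷ wm) (𝟙 a) (𝟙 a ◁ β) := by
  simp [IsLift]

end WClass

theorem CategoryTheory.Bicategory.whiskerLeft_eq_of_iso_intertwines {B : Type u}
    [Bicategory.{w, v} B] {a b c : B} {x y : a ⟶ b} (e : x ≅ y) {f g : b ⟶ c}
    (β₁ β₂ : f ⟶ g) (h : x ◁ β₁ ≫ e.hom ▷ g = e.hom ▷ f ≫ y ◁ β₂) :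
    x ◁ β₁ = x ◁ β₂ := by
  rw [← whisker_exchange e.hom β₂] at h
  exact cancel_mono _ |>.mp h

theorem statement2_general {B : Type u} [Bicategory.{w, v} B] (W : WClass B)
    (h1 : W.WB1) (h4 : W.WB4)
    {a b c : B} (f g : c ⟶ b) (wm : b ⟶ a) (hw : W wm)
    (β₁ β₂ : f ⟶ g) (hβ : β₁ ▷ wm = β₂ ▷ wm) :
    ∃ (d : B) (vm : d ⟶ c), W vm ∧ vm ◁ β₁ = vm ◁ β₂ := by
  have lift₂ := WClass.isLift_id_whiskerLeft wm β₂
  rw [← hβ] at lift₂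
  obtain ⟨d, s, t, hs, -, e, he⟩ := h4.2 f g wm hw _ (𝟙 c) _ (h1 c)
    (WClass.isLift_id_whiskerLeft wm β₁) (𝟙 c) _ (h1 c) lift₂
  simp only [← comp_whiskerLeft] at he
  exact ⟨d, s ≫ 𝟙 c, hs, whiskerLeft_eq_of_iso_intertwines e β₁ β₂ he⟩

theorem statement2 {B : Type u} [Bicategory.{w, v} B] (W : WClass B)
    (h1 : W.WB1) (h2 : W.WB2) (h3 : W.WB3) (h4 : W.WB4)
    {a b c : B} (f g : c ⟶ b) (wm : b ⟶ a) (hw : W wm)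
    (β₁ β₂ : f ⟶ g) (hβ : β₁ ▷ wm = β₂ ▷ wm) :
    ∃ (d : B) (vm : d ⟶ c), W vm ∧ vm ◁ β₁ = vm ◁ β₂ :=
  statement2_general W h1 h4 f g wm hw β₁ β₂ hβ
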